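/- Let r ≥ 3, c ≥ 1, and g ≥ c + 1 be integers, and consider the formal power series G(t) = (1/2)·( (1+t^{r−1})^c (1+t^r)^c + (1−t^{r−1})^c (1−t^r)^c )·(1 + t^{2r−1})^{g−c−1}. Then the coefficient of t^{2r−1} in G(t) equals g + c² − c − 1. -/
import Mathlib

open Polynomial

namespace GCoeffAux

open Finset

lemma aux_coeff_zero_pow (a : ℚ) (n : ℕ) : ((1 + C a * X)^n).coeff 0 = 1 := by
  simp [coeff_zero_eq_eval_zero]

lemma aux_coeff_one_pow (a : ℚ) (n : ℕ) : ((1 + C a * X)^n).coeff 1 = n * a := by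
  induction n with
  | zero => simp [coeff_one]
  | succ n ih =>
    have h : (1 + C a * X : ℚ[X])^(n+1)
        = (1 + C a * X)^n + C a * ((1 + C a * X)^n * X) := by ring
    rw [h, coeff_add, coeff_C_mul]
    rw [show (1:ℕ) = 0 + 1 from rfl, coeff_mul_X]
    rw [ih, aux_coeff_zero_pow]
    push_cast; ring

lemma aux_AN (r : ℕ) (hr : 3 ≤ r) (p q : ℚ[X]) :
    (expand ℚ (r-1) p * expand ℚ r q).coeff (2*r-1) = p.coeff 1 * q.coeff 1 := by
  have hr1 : 0 < r - 1 := by omega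
  have hrr : 0 < r := by omega
  rw [coeff_mul, Finset.Nat.sum_antidiagonal_eq_sum_range_succ_mk]
  rw [Finset.sum_eq_single_of_mem (r-1) (by simp; omega)]
  · rw [coeff_expand hr1, coeff_expand hrr, if_pos dvd_rfl,
      Nat.div_self hr1, show 2*r-1-(r-1) = r by omega, if_pos dvd_rfl, Nat.div_self hrr]
  · intro k hk hne
    rw [Finset.mem_range] at hk
    rw [coeff_expand hr1, coeff_expand hrr]
    split_ifs with h1 h2
    · exfalso
      obtain ⟨u, hu⟩ := h2
      obtain ⟨v, hv⟩ := h1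
      rcases u with _ | _ | u
      · have hk' : k = 2*r - 1 := by omega
        have h2r : (r-1) * v = 2*r - 1 := by omega
        rcases v with _ | _ | _ | v
        · omega
        · omega
        · omega
        · have h3 : (r-1) * (v+1+1+1) = (r-1)*v + 3*(r-1) := by ring
          omega
      · exact hne (by omega)
      · have h3 : r * (u+1+1) = r*u + 2*r := by ring
        omega
    · simp
    · simp
    · simp

end GCoeffAux

open GCoeffAux Finset in
/-- The coefficient of `t^(2r-1)` in `G(t)` equals `g + c² − c − 1`. -/
theorem G_coeff_two_r_sub_one (r c g : ℕ) (hr : 3 ≤ r) (hc : 1 ≤ c) (hg : c + 1 ≤ g) :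
    (Polynomial.C (1/2 : ℚ) *
        ((1 + X ^ (r - 1)) ^ c * (1 + X ^ r) ^ c +
          (1 - X ^ (r - 1)) ^ c * (1 - X ^ r) ^ c) *
        (1 + X ^ (2 * r - 1)) ^ (g - c - 1)).coeff (2 * r - 1)
      = (g : ℚ) + (c : ℚ) ^ 2 - (c : ℚ) - 1 := by
  have hr1 : 0 < r - 1 := by omega
  have hrr : 0 < r := by omega
  have hN : 0 < 2*r - 1 := by omega
  set p : ℚ[X] := (1 + C (1:ℚ) * X)^c with hp
  set q : ℚ[X] := (1 + C (-1:ℚ) * X)^c with hq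
  set m := g - c - 1 with hm
  have e1 : (1 + X ^ (r-1) : ℚ[X]) ^ c = expand ℚ (r-1) p := by
    simp [hp, map_pow, map_add, expand_X]
  have e2 : (1 + X ^ r : ℚ[X]) ^ c = expand ℚ r p := by
    simp [hp, map_pow, map_add, expand_X]
  have e3 : (1 - X ^ (r-1) : ℚ[X]) ^ c = expand ℚ (r-1) q := by
    simp [hq, map_pow, map_add, map_mul, expand_X, sub_eq_add_neg]
  have e4 : (1 - X ^ r : ℚ[X]) ^ c = expand ℚ r q := by
    simp [hq, map_pow, map_add, map_mul, expand_X, sub_eq_add_neg]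
  have e5 : (1 + X ^ (2*r-1) : ℚ[X]) ^ m = expand ℚ (2*r-1) ((1 + C (1:ℚ) * X)^m) := by
    simp [map_pow, map_add, expand_X]
  rw [e1, e2, e3, e4, e5]
  set A : ℚ[X] := expand ℚ (r-1) p * expand ℚ r p + expand ℚ (r-1) q * expand ℚ r q with hA
  set B : ℚ[X] := expand ℚ (2*r-1) ((1 + C (1:ℚ) * X)^m) with hB
  have cB0 : B.coeff 0 = 1 := by
    rw [hB, coeff_expand hN, if_pos (dvd_zero _), Nat.zero_div, aux_coeff_zero_pow]
  have cBN : B.coeff (2*r-1) = (m : ℚ) := by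
    rw [hB, coeff_expand hN, if_pos dvd_rfl, Nat.div_self hN, aux_coeff_one_pow, mul_one]
  have cBmid : ∀ k, 0 < k → k < 2*r-1 → B.coeff k = 0 := by
    intro k h0 hk
    rw [hB, coeff_expand hN, if_neg]
    intro hdvd
    exact absurd (Nat.le_of_dvd h0 hdvd) (by omega)
  have cA0 : A.coeff 0 = 2 := by
    rw [hA, coeff_add, mul_coeff_zero, mul_coeff_zero,
      coeff_expand hr1, coeff_expand hrr, coeff_expand hr1, coeff_expand hrr]
    simp [hp, hq, Nat.zero_div, dvd_zero, aux_coeff_zero_pow, coeff_zero_eq_eval_zero]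
    norm_num
  have cAN : A.coeff (2*r-1) = 2 * (c:ℚ)^2 := by
    rw [hA, coeff_add, aux_AN r hr, aux_AN r hr, hp, hq,
      aux_coeff_one_pow, aux_coeff_one_pow]
    ring
  have hmc : ((m : ℕ) : ℚ) = (g : ℚ) - c - 1 := by
    rw [hm, Nat.cast_sub (by omega), Nat.cast_sub (by omega)]
    push_cast; ring
  rw [mul_assoc, coeff_C_mul, coeff_mul, Finset.Nat.sum_antidiagonal_eq_sum_range_succ_mk,
    Finset.sum_range_succ, Nat.sub_self,
    Finset.sum_eq_single_of_mem 0 (Finset.mem_range.mpr hN)]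
  · rw [Nat.sub_zero, cA0, cAN, cB0, cBN, hmc]
    ring
  · intro k hk hne
    rw [Finset.mem_range] at hk
    rw [cBmid (2*r-1-k) (by omega) (by omega), mul_zero]
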